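/- arXiv:1706.02563 — 8 statements merged into one kernel-verified Lean document; each statement's English description precedes it below -/
import Mathlib

section
/- Let k ≥ 2, let f₁, …, f_k be measurable probability density functions on ℝ, and let p lie in the open simplex. Let D(p) be the (k−1)×(k−1) matrix with entries D_{jh} = δ_{jh}/p_j + 1/p_k (δ_{jh} the Kronecker delta). Then D(p) − M(p) is positive semidefinite: for every v ∈ ℝ^{k−1}, vᵀ M(p) v ≤ vᵀ D(p) v. (This is the information-loss inequality: the Fisher information of the observed mixture is dominated by the Fisher information of the complete, data-augmented model, whose Fisher matrix for the weights is D(p).) -/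
open MeasureTheory Matrix

noncomputable section

/-- The mixture density `∑ ℓ pℓ fℓ(x)`. -/
def mixDens {k : ℕ} (f : Fin k → ℝ → ℝ) (p : Fin k → ℝ) (x : ℝ) : ℝ :=
  ∑ ℓ, p ℓ * f ℓ x

/-- The `(k-1) × (k-1)` Fisher information matrix for the weights of a mixture of
`k = m + 2` densities, with entries
`M_{jh}(p) = ∫ (f_j - f_{k-1})(f_h - f_{k-1}) / (∑ℓ pℓ fℓ)` (division by zero being zero). -/
def weightFisher {m : ℕ} (f : Fin (m + 2) → ℝ → ℝ) (p : Fin (m + 2) → ℝ) :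
    Matrix (Fin (m + 1)) (Fin (m + 1)) ℝ := fun j h =>
  ∫ x : ℝ,
    (f j.castSucc x - f (Fin.last (m + 1)) x) * (f h.castSucc x - f (Fin.last (m + 1)) x) /
      mixDens f p x

/-- The Fisher information matrix for the weights of the complete (data-augmented)
model, i.e. of the multinomial model: `D_{jh} = δ_{jh}/p_j + 1/p_{k-1}`. -/
def completeWeightFisher {m : ℕ} (p : Fin (m + 2) → ℝ) :
    Matrix (Fin (m + 1)) (Fin (m + 1)) ℝ := fun j h =>
  (if j = h then (p j.castSucc)⁻¹ else 0) + (p (Fin.last (m + 1)))⁻¹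

/-!
Let `E` be the `(k-1) × k` matrix with rows `e_j - e_k`. Then `M(p)` is the Gram matrix of the
functions `(E f)_j` for the weight `1 / ∑ ℓ, p ℓ * f ℓ`, and `D(p) = E diag(1/p) Eᵀ`. For
`c = Eᵀ v`, Cauchy–Schwarz gives pointwise `(∑ c_ℓ f_ℓ)² / ∑ p_ℓ f_ℓ ≤ ∑ c_ℓ² f_ℓ / p_ℓ`, and
integrating against the densities yields `vᵀ M v ≤ ∑ c_ℓ² / p_ℓ = vᵀ D v`.
-/

section MixtureGram

variable {ι κ α : Type*} [Fintype ι] [Fintype κ] [MeasurableSpace α] {μ : Measure α}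
  {f : ι → α → ℝ} {p : ι → ℝ}

lemma sq_sum_mul_div_sum_mul_le (c : ι → ℝ) {y : ι → ℝ} (hp : ∀ i, 0 < p i)
    (hy : ∀ i, 0 ≤ y i) :
    (∑ i, c i * y i) ^ 2 / (∑ i, p i * y i) ≤ ∑ i, c i ^ 2 / p i * y i := by
  have hpy : ∀ i, 0 ≤ p i * y i := fun i => mul_nonneg (hp i).le (hy i)
  have hcy : ∀ i, 0 ≤ c i ^ 2 / p i * y i := fun i =>
    mul_nonneg (div_nonneg (sq_nonneg _) (hp i).le) (hy i)
  -- where `∑ i, p i * y i = 0` the left side is the junk value `0`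
  refine div_le_of_le_mul₀ (Finset.sum_nonneg fun i _ => hpy i)
    (Finset.sum_nonneg fun i _ => hcy i)
    (Finset.sum_sq_le_sum_mul_sum_of_sq_le_mul _ (fun i _ => hcy i) (fun i _ => hpy i)
      fun i _ => le_of_eq ?_)
  field_simp [(hp i).ne']

lemma integrable_sq_sum_mul_div_sum_mul (hf : ∀ i x, 0 ≤ f i x)
    (hint : ∀ i, Integrable (f i) μ) (hp : ∀ i, 0 < p i) (c : ι → ℝ) :
    Integrable (fun x => (∑ i, c i * f i x) ^ 2 / ∑ i, p i * f i x) μ := by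
  have hlin : ∀ c : ι → ℝ, Integrable (fun x => ∑ i, c i * f i x) μ := fun c =>
    integrable_finsetSum _ fun i _ => (hint i).const_mul (c i)
  have hbound : Integrable (fun x => ∑ i, c i ^ 2 / p i * f i x) μ :=
    integrable_finsetSum _ fun i _ => (hint i).const_mul _
  refine hbound.mono' (((hlin c).aemeasurable.pow_const 2).div
    (hlin p).aemeasurable).aestronglyMeasurable (.of_forall fun x => ?_)
  rw [Real.norm_of_nonneg (div_nonneg (sq_nonneg _)
    (Finset.sum_nonneg fun i _ => mul_nonneg (hp i).le (hf i x)))]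
  exact sq_sum_mul_div_sum_mul_le c hp (hf · x)

lemma integral_sq_sum_mul_div_sum_mul_le (hf : ∀ i x, 0 ≤ f i x)
    (hf1 : ∀ i, ∫ x, f i x ∂μ = 1) (hp : ∀ i, 0 < p i) (c : ι → ℝ) :
    ∫ x, (∑ i, c i * f i x) ^ 2 / (∑ i, p i * f i x) ∂μ ≤ ∑ i, c i ^ 2 / p i := by
  have hint : ∀ i, Integrable (f i) μ := fun i =>
    .of_integral_ne_zero (by simp [hf1 i])
  calc ∫ x, (∑ i, c i * f i x) ^ 2 / (∑ i, p i * f i x) ∂μ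
      ≤ ∫ x, ∑ i, c i ^ 2 / p i * f i x ∂μ :=
        integral_mono (integrable_sq_sum_mul_div_sum_mul hf hint hp c)
          (integrable_finsetSum _ fun i _ => (hint i).const_mul _)
          fun x => sq_sum_mul_div_sum_mul_le c hp (hf · x)
    _ = ∑ i, c i ^ 2 / p i := by
        simp only [integral_finsetSum _ fun i _ => (hint i).const_mul _, integral_const_mul,
          hf1, mul_one]

lemma integrable_sum_mul_mul_sum_mul_div_sum_mul (hf : ∀ i x, 0 ≤ f i x)
    (hint : ∀ i, Integrable (f i) μ) (hp : ∀ i, 0 < p i) (a b : ι → ℝ) :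
    Integrable (fun x => (∑ i, a i * f i x) * (∑ i, b i * f i x) / ∑ i, p i * f i x) μ := by
  have polarization : ∀ x, (∑ i, a i * f i x) * (∑ i, b i * f i x) / ∑ i, p i * f i x =
      ((∑ i, (a + b) i * f i x) ^ 2 / (∑ i, p i * f i x) -
        (∑ i, (a - b) i * f i x) ^ 2 / ∑ i, p i * f i x) / 4 := fun x => by
    simp only [Pi.add_apply, Pi.sub_apply, add_mul, sub_mul, Finset.sum_add_distrib,
      Finset.sum_sub_distrib]
    ring
  simp_rw [polarization]
  exact ((integrable_sq_sum_mul_div_sum_mul hf hint hp _).sub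
    (integrable_sq_sum_mul_div_sum_mul hf hint hp _)).div_const 4

lemma dotProduct_integral_mul_div_mulVec (a : κ → α → ℝ) (w : α → ℝ)
    (hint : ∀ j h, Integrable (fun x => a j x * a h x / w x) μ) (v : κ → ℝ) :
    v ⬝ᵥ (of fun j h => ∫ x, a j x * a h x / w x ∂μ) *ᵥ v =
      ∫ x, (∑ j, v j * a j x) ^ 2 / w x ∂μ := by
  have hterm : ∀ j h, v j * ((∫ x, a j x * a h x / w x ∂μ) * v h) =
      ∫ x, v j * v h * (a j x * a h x / w x) ∂μ := fun j h => by
    rw [integral_const_mul]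
    ring
  have hpoint : ∀ x, ∑ j, ∑ h, v j * v h * (a j x * a h x / w x) =
      (∑ j, v j * a j x) ^ 2 / w x := fun x => by
    simp only [sq, Finset.sum_mul_sum, Finset.sum_div]
    exact Finset.sum_congr rfl fun j _ => Finset.sum_congr rfl fun h _ => by ring
  simp only [dotProduct, mulVec, of_apply, Finset.mul_sum, hterm]
  rw [← integral_congr_ae (.of_forall hpoint), integral_finsetSum _ fun j _ =>
    integrable_finsetSum _ fun h _ => (hint j h).const_mul _]
  exact Finset.sum_congr rfl fun j _ =>
    (integral_finsetSum _ fun h _ => (hint j h).const_mul _).symm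

def mixtureGram (μ : Measure α) (E : Matrix κ ι ℝ) (f : ι → α → ℝ) (p : ι → ℝ) :
    Matrix κ κ ℝ :=
  of fun j h => ∫ x, (∑ i, E j i * f i x) * (∑ i, E h i * f i x) / ∑ i, p i * f i x ∂μ

lemma dotProduct_mixtureGram_mulVec (hf : ∀ i x, 0 ≤ f i x)
    (hint : ∀ i, Integrable (f i) μ) (hp : ∀ i, 0 < p i) (E : Matrix κ ι ℝ) (v : κ → ℝ) :
    v ⬝ᵥ mixtureGram μ E f p *ᵥ v =
      ∫ x, (∑ i, (v ᵥ* E) i * f i x) ^ 2 / ∑ i, p i * f i x ∂μ := by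
  have hcomb : ∀ x, ∑ i, (v ᵥ* E) i * f i x = ∑ j, v j * ∑ i, E j i * f i x := fun x => by
    simp only [vecMul, dotProduct, Finset.sum_mul, Finset.mul_sum, mul_assoc]
    exact Finset.sum_comm
  simp only [hcomb]
  exact dotProduct_integral_mul_div_mulVec _ _
    (fun j h => integrable_sum_mul_mul_sum_mul_div_sum_mul hf hint hp (E j) (E h)) v

lemma dotProduct_mul_diagonal_mul_transpose_mulVec [DecidableEq ι] (E : Matrix κ ι ℝ)
    (d : ι → ℝ) (v : κ → ℝ) :
    v ⬝ᵥ (E * diagonal d * Eᵀ) *ᵥ v = ∑ i, d i * (v ᵥ* E) i ^ 2 := by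
  rw [← mulVec_mulVec, ← mulVec_mulVec, dotProduct_mulVec, mulVec_transpose]
  simp only [dotProduct, mulVec_diagonal]
  exact Finset.sum_congr rfl fun i _ => by ring

theorem dotProduct_mixtureGram_mulVec_le [DecidableEq ι] (hf : ∀ i x, 0 ≤ f i x)
    (hf1 : ∀ i, ∫ x, f i x ∂μ = 1) (hp : ∀ i, 0 < p i) (E : Matrix κ ι ℝ) (v : κ → ℝ) :
    v ⬝ᵥ mixtureGram μ E f p *ᵥ v ≤ v ⬝ᵥ (E * diagonal p⁻¹ * Eᵀ) *ᵥ v := by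
  have hint : ∀ i, Integrable (f i) μ := fun i =>
    .of_integral_ne_zero (by simp [hf1 i])
  rw [dotProduct_mixtureGram_mulVec hf hint hp, dotProduct_mul_diagonal_mul_transpose_mulVec]
  refine (integral_sq_sum_mul_div_sum_mul_le hf hf1 hp _).trans_eq ?_
  simp only [Pi.inv_apply, div_eq_inv_mul]

end MixtureGram

def contrastWithLast (m : ℕ) : Matrix (Fin (m + 1)) (Fin (m + 2)) ℝ :=
  of fun j => Pi.single j.castSucc 1 - Pi.single (Fin.last (m + 1)) 1

lemma sum_contrastWithLast_mul {m : ℕ} (j : Fin (m + 1)) (y : Fin (m + 2) → ℝ) :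
    ∑ i, contrastWithLast m j i * y i = y j.castSucc - y (Fin.last (m + 1)) := by
  simp [contrastWithLast, sub_mul, Finset.sum_sub_distrib, Pi.single_apply]

lemma weightFisher_eq_mixtureGram {m : ℕ} (f : Fin (m + 2) → ℝ → ℝ) (p : Fin (m + 2) → ℝ) :
    weightFisher f p = mixtureGram volume (contrastWithLast m) f p := by
  ext j h
  simp only [weightFisher, mixtureGram, of_apply, sum_contrastWithLast_mul, mixDens]

lemma completeWeightFisher_eq_mul_diagonal_mul_transpose {m : ℕ} (p : Fin (m + 2) → ℝ) :
    completeWeightFisher p = contrastWithLast m * diagonal p⁻¹ * (contrastWithLast m)ᵀ := by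
  ext j h
  rcases eq_or_ne j h with rfl | hjh <;>
    simp [completeWeightFisher, contrastWithLast, mul_apply, diagonal_apply, Pi.single_apply,
      sub_mul, mul_sub, Finset.sum_sub_distrib, Ne.symm, *]

theorem weightFisher_le_completeWeightFisher_general (m : ℕ) (f : Fin (m + 2) → ℝ → ℝ)
    (hnonneg : ∀ ℓ x, 0 ≤ f ℓ x)
    (hpdf : ∀ ℓ, ∫ x : ℝ, f ℓ x = 1)
    (p : Fin (m + 2) → ℝ) (hp : ∀ ℓ, 0 < p ℓ ∧ p ℓ < 1) :
    ∀ v : Fin (m + 1) → ℝ,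
      v ⬝ᵥ (weightFisher f p).mulVec v ≤ v ⬝ᵥ (completeWeightFisher p).mulVec v := by
  intro v
  rw [weightFisher_eq_mixtureGram, completeWeightFisher_eq_mul_diagonal_mul_transpose]
  exact dotProduct_mixtureGram_mulVec_le hnonneg hpdf (fun ℓ => (hp ℓ).1) _ v

/-- the information-loss inequality.  For a mixture of `m + 2 ≥ 2`
measurable probability densities and `p` in the open simplex, `D(p) - M(p)` is
positive semidefinite: `vᵀ M(p) v ≤ vᵀ D(p) v` for every `v`. -/
theorem weightFisher_le_completeWeightFisher (m : ℕ) (f : Fin (m + 2) → ℝ → ℝ)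
    (hmeas : ∀ ℓ, Measurable (f ℓ)) (hnonneg : ∀ ℓ x, 0 ≤ f ℓ x)
    (hpdf : ∀ ℓ, ∫ x : ℝ, f ℓ x = 1)
    (p : Fin (m + 2) → ℝ) (hp : ∀ ℓ, 0 < p ℓ ∧ p ℓ < 1) (hsum : ∑ ℓ, p ℓ = 1) :
    ∀ v : Fin (m + 1) → ℝ,
      v ⬝ᵥ (weightFisher f p).mulVec v ≤ v ⬝ᵥ (completeWeightFisher p).mulVec v :=
  weightFisher_le_completeWeightFisher_general m f hnonneg hpdf p hp
end
end

section
/- Let k ≥ 2, let f₁, …, f_k be measurable probability density functions on ℝ, and let p lie in the open simplex. Then det M(p) ≤ (p₁ p₂ ⋯ p_k)^{−1}, and consequently √(det M(p)) ≤ Π_{ℓ=1}^k p_ℓ^{−1/2}; that is, the Jeffreys prior for the mixture weights is pointwise bounded by (the unnormalized density of) the Dirichlet 𝒟(1/2, …, 1/2) distribution. -/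
open MeasureTheory

noncomputable section

/-!
For `v ∈ ℝ^{k-1}` put `c = (v, -∑ v) ∈ ℝ^k`. Then `vᵀ M(p) v = ∫ (∑ cℓ fℓ)² / (∑ pℓ fℓ)`, and
Cauchy–Schwarz bounds the integrand pointwise by `∑ cℓ² / pℓ · fℓ`, whose integral is
`∑ cℓ² / pℓ = vᵀ D v` for the Fisher information `D = diag(1 / p_j) + 1 / p_k` of the
categorical distribution `p`. Hence `0 ≤ M(p) ≤ D` in the Loewner order, and since the
determinant is monotone on positive semidefinite matrices, `det M(p) ≤ det D = (p₁ ⋯ p_k)⁻¹`.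
-/

open Matrix
open scoped MatrixOrder

namespace Matrix

variable {n : Type*} [Fintype n] [DecidableEq n]

lemma IsHermitian.eigenvalues_le_one {C : Matrix n n ℝ} (hC : C.IsHermitian) (h : C ≤ 1)
    (i : n) : hC.eigenvalues i ≤ 1 := by
  set v : n → ℝ := ⇑(hC.eigenvectorBasis i)
  have hv : v ⬝ᵥ v = 1 := by
    have := real_inner_self_eq_norm_sq (hC.eigenvectorBasis i)
    rw [hC.eigenvectorBasis.orthonormal.1 i, EuclideanSpace.inner_eq_star_dotProduct] at this
    simpa using this
  have := h.dotProduct_mulVec_nonneg v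
  rw [hC.eigenvalues_eq i]
  simp only [star_trivial, sub_mulVec, one_mulVec, dotProduct_sub, hv, sub_nonneg] at this
  simpa using this

lemma det_le_one_of_nonneg_of_le_one {C : Matrix n n ℝ} (h₀ : 0 ≤ C) (h₁ : C ≤ 1) :
    C.det ≤ 1 := by
  have hC := nonneg_iff_posSemidef.mp h₀
  rw [hC.1.det_eq_prod_eigenvalues]
  exact Finset.prod_le_one (fun i _ => hC.eigenvalues_nonneg i)
    fun i _ => hC.1.eigenvalues_le_one h₁ i

/-- Writing `B = S²`, the matrix `A = S C S` has `0 ≤ C ≤ 1`. -/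
lemma det_le_det_of_le {A B : Matrix n n ℝ} (hA : 0 ≤ A) (hB : B.PosDef) (hAB : A ≤ B) :
    A.det ≤ B.det := by
  obtain ⟨S, hS, rfl⟩ : ∃ S : Matrix n n ℝ, S.IsHermitian ∧ B = S * S :=
    ⟨CFC.sqrt B, (nonneg_iff_posSemidef.mp (CFC.sqrt_nonneg B)).1,
      (CFC.sqrt_mul_sqrt_self B hB.posSemidef.nonneg).symm⟩
  have hSdet : IsUnit S.det := by
    have := hB.det_pos
    rw [det_mul] at this
    exact isUnit_iff_ne_zero.mpr fun h => by simp [h] at this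
  have hSinv : (S⁻¹)ᴴ = S⁻¹ := hS.inv.eq
  set C := S⁻¹ * A * S⁻¹
  have hA_eq : A = S * C * S := by
    simp only [C, ← Matrix.mul_assoc, mul_nonsing_inv _ hSdet, Matrix.one_mul]
    rw [Matrix.mul_assoc, nonsing_inv_mul _ hSdet, Matrix.mul_one]
  have hC₀ : 0 ≤ C := by
    have := (nonneg_iff_posSemidef.mp hA).mul_mul_conjTranspose_same S⁻¹
    rwa [hSinv, ← nonneg_iff_posSemidef] at this
  have hC₁ : C ≤ 1 := by
    have := hAB.mul_mul_conjTranspose_same S⁻¹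
    rwa [hSinv, Matrix.mul_sub, Matrix.sub_mul, ← Matrix.mul_assoc,
      nonsing_inv_mul _ hSdet, Matrix.one_mul, mul_nonsing_inv _ hSdet] at this
  clear_value C
  calc A.det = C.det * (S * S).det := by rw [hA_eq, det_mul, det_mul, det_mul]; ring
    _ ≤ 1 * (S * S).det := by
      gcongr
      exacts [hB.det_pos.le, det_le_one_of_nonneg_of_le_one hC₀ hC₁]
    _ = (S * S).det := one_mul _

lemma det_diagonal_add_const {K : Type*} [Field K] {a : n → K} (ha : ∀ i, a i ≠ 0) (t : K) :
    (diagonal a + of fun _ _ => t).det = (∏ i, a i) * (1 + t * ∑ i, (a i)⁻¹) := by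
  have hconst : (of fun _ _ => t : Matrix n n K) =
      replicateCol (Fin 1) (fun _ : n => t) * replicateRow (Fin 1) (fun _ : n => (1 : K)) := by
    ext i j; simp [replicateCol, replicateRow, Matrix.mul_apply]
  have hinv : (diagonal a)⁻¹ = diagonal fun i => (a i)⁻¹ :=
    inv_eq_left_inv <| by simp [diagonal_mul_diagonal, inv_mul_cancel₀ (ha _)]
  have hunit : IsUnit (diagonal a).det := by
    simpa [isUnit_iff_ne_zero, Finset.prod_ne_zero_iff] using ha
  rw [hconst, det_add_mul _ _ hunit, det_diagonal, det_unique, hinv]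
  simp [Matrix.mul_apply, replicateCol, replicateRow, Finset.mul_sum, mul_comm, diagonal_apply]

end Matrix

lemma Finset.sq_sum_mul_div_sum_mul_le {ι : Type*} (s : Finset ι) (c : ι → ℝ) {w q : ι → ℝ}
    (hw : ∀ i ∈ s, 0 < w i) (hq : ∀ i ∈ s, 0 ≤ q i) :
    (∑ i ∈ s, c i * q i) ^ 2 / ∑ i ∈ s, w i * q i ≤ ∑ i ∈ s, c i ^ 2 / w i * q i := by
  have hwq : ∀ i ∈ s, 0 ≤ w i * q i := fun i hi => mul_nonneg (hw i hi).le (hq i hi)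
  have hcwq : ∀ i ∈ s, 0 ≤ c i ^ 2 / w i * q i := fun i hi =>
    mul_nonneg (div_nonneg (sq_nonneg _) (hw i hi).le) (hq i hi)
  refine div_le_of_le_mul₀ (sum_nonneg hwq) (sum_nonneg hcwq)
    (sum_sq_le_sum_mul_sum_of_sq_le_mul s hcwq hwq fun i hi => le_of_eq ?_)
  field_simp [(hw i hi).ne']

lemma Fin.sum_snoc_neg_sum_mul {R : Type*} [CommRing R] {m : ℕ} (v : Fin (m + 1) → R)
    (a : Fin (m + 2) → R) :
    ∑ ℓ, (Fin.snoc v (-∑ j, v j) : Fin (m + 2) → R) ℓ * a ℓ =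
      ∑ j, v j * (a j.castSucc - a (Fin.last (m + 1))) := by
  rw [Fin.sum_univ_castSucc]
  simp only [Fin.snoc_castSucc, Fin.snoc_last, mul_sub, Finset.sum_sub_distrib, ← Finset.sum_mul]
  ring

lemma Real.sqrt_inv_prod_eq_prod_rpow_neg_half {ι : Type*} (s : Finset ι) {p : ι → ℝ}
    (hp : ∀ i ∈ s, 0 ≤ p i) : √(∏ i ∈ s, p i)⁻¹ = ∏ i ∈ s, p i ^ (-(1 : ℝ) / 2) := by
  rw [Real.finsetProd_rpow s p hp, neg_div, Real.rpow_neg (Finset.prod_nonneg hp),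
    Real.sqrt_inv, Real.sqrt_eq_rpow, one_div]

/-- The value of `weightFisher f p` when the densities `f` have pairwise disjoint supports. -/
def categoricalFisher {m : ℕ} (p : Fin (m + 2) → ℝ) : Matrix (Fin (m + 1)) (Fin (m + 1)) ℝ :=
  diagonal (fun j => (p j.castSucc)⁻¹) + of fun _ _ => (p (Fin.last (m + 1)))⁻¹

section CategoricalFisher

variable {m : ℕ} {p : Fin (m + 2) → ℝ}

lemma dotProduct_categoricalFisher_mulVec (p : Fin (m + 2) → ℝ) (v : Fin (m + 1) → ℝ) :
    v ⬝ᵥ categoricalFisher p *ᵥ v =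
      ∑ ℓ, (Fin.snoc v (-∑ j, v j) : Fin (m + 2) → ℝ) ℓ ^ 2 / p ℓ := by
  rw [Fin.sum_univ_castSucc]
  simp only [Fin.snoc_castSucc, Fin.snoc_last, neg_sq, categoricalFisher, add_mulVec,
    dotProduct_add]
  congr 1
  · simp only [dotProduct, mulVec_diagonal]
    exact Finset.sum_congr rfl fun j _ => by ring
  · simp only [dotProduct, mulVec, of_apply, ← Finset.mul_sum, ← Finset.sum_mul]
    ring

lemma categoricalFisher_posDef (hp : ∀ ℓ, 0 < p ℓ) : (categoricalFisher p).PosDef := by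
  refine PosDef.add_posSemidef (posDef_diagonal_iff.mpr fun j => inv_pos.mpr (hp _)) ?_
  have : (of fun _ _ => (p (Fin.last (m + 1)))⁻¹ : Matrix (Fin (m + 1)) (Fin (m + 1)) ℝ) =
      (p (Fin.last (m + 1)))⁻¹ • vecMulVec 1 (star 1) := by
    ext; simp [vecMulVec]
  rw [this]
  exact (posSemidef_vecMulVec_self_star 1).smul (inv_nonneg.mpr (hp _).le)

lemma det_categoricalFisher (hp : ∀ ℓ, p ℓ ≠ 0) (hsum : ∑ ℓ, p ℓ = 1) :
    (categoricalFisher p).det = (∏ ℓ, p ℓ)⁻¹ := by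
  rw [Fin.sum_univ_castSucc] at hsum
  rw [categoricalFisher, det_diagonal_add_const (fun j => inv_ne_zero (hp _)),
    Fin.prod_univ_castSucc p]
  simp only [inv_inv, eq_sub_of_add_eq hsum, Finset.prod_inv_distrib]
  field_simp [hp (Fin.last _)]
  ring

end CategoricalFisher

section Mixture

variable {k : ℕ} {f : Fin k → ℝ → ℝ} {p : Fin k → ℝ}

lemma mixDens_nonneg (hf : ∀ ℓ x, 0 ≤ f ℓ x) (hp : ∀ ℓ, 0 ≤ p ℓ) (x : ℝ) :
    0 ≤ mixDens f p x :=
  Finset.sum_nonneg fun ℓ _ => mul_nonneg (hp ℓ) (hf ℓ x)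

lemma sq_sum_mul_div_mixDens_le (hf : ∀ ℓ x, 0 ≤ f ℓ x) (hp : ∀ ℓ, 0 < p ℓ) (c : Fin k → ℝ)
    (x : ℝ) : (∑ ℓ, c ℓ * f ℓ x) ^ 2 / mixDens f p x ≤ ∑ ℓ, c ℓ ^ 2 / p ℓ * f ℓ x :=
  Finset.sq_sum_mul_div_sum_mul_le _ c (fun ℓ _ => hp ℓ) fun ℓ _ => hf ℓ x

lemma integrable_sq_sum_mul_div_mixDens (hf : ∀ ℓ x, 0 ≤ f ℓ x)
    (hint : ∀ ℓ, Integrable (f ℓ)) (hp : ∀ ℓ, 0 < p ℓ) (c : Fin k → ℝ) :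
    Integrable fun x => (∑ ℓ, c ℓ * f ℓ x) ^ 2 / mixDens f p x := by
  have hmeas : AEMeasurable fun x => (∑ ℓ, c ℓ * f ℓ x) ^ 2 / mixDens f p x := by
    have := fun ℓ => (hint ℓ).aemeasurable
    unfold mixDens
    fun_prop
  refine Integrable.mono'
    (integrable_finsetSum Finset.univ fun ℓ _ => (hint ℓ).const_mul (c ℓ ^ 2 / p ℓ))
    hmeas.aestronglyMeasurable (.of_forall fun x => ?_)
  rw [Real.norm_of_nonneg (div_nonneg (sq_nonneg _) (mixDens_nonneg hf (fun ℓ => (hp ℓ).le) x))]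
  exact sq_sum_mul_div_mixDens_le hf hp c x

lemma integral_sq_sum_mul_div_mixDens_le (hf : ∀ ℓ x, 0 ≤ f ℓ x)
    (hpdf : ∀ ℓ, ∫ x, f ℓ x = 1) (hp : ∀ ℓ, 0 < p ℓ) (c : Fin k → ℝ) :
    ∫ x, (∑ ℓ, c ℓ * f ℓ x) ^ 2 / mixDens f p x ≤ ∑ ℓ, c ℓ ^ 2 / p ℓ := by
  have hint : ∀ ℓ, Integrable (f ℓ) := fun ℓ => .of_integral_ne_zero (by simp [hpdf ℓ])
  calc ∫ x, (∑ ℓ, c ℓ * f ℓ x) ^ 2 / mixDens f p x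
      ≤ ∫ x, ∑ ℓ, c ℓ ^ 2 / p ℓ * f ℓ x :=
        integral_mono (integrable_sq_sum_mul_div_mixDens hf hint hp c)
          (integrable_finsetSum Finset.univ fun ℓ _ => (hint ℓ).const_mul _)
          (sq_sum_mul_div_mixDens_le hf hp c)
    _ = ∑ ℓ, c ℓ ^ 2 / p ℓ := by
        rw [integral_finsetSum _ fun ℓ _ => (hint ℓ).const_mul _]
        simp [integral_const_mul, hpdf]

end Mixture

section WeightFisher

variable {m : ℕ} {f : Fin (m + 2) → ℝ → ℝ} {p : Fin (m + 2) → ℝ}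

lemma integrable_weightFisher_integrand (hf : ∀ ℓ x, 0 ≤ f ℓ x)
    (hint : ∀ ℓ, Integrable (f ℓ)) (hp : ∀ ℓ, 0 < p ℓ) (j h : Fin (m + 1)) :
    Integrable fun x => (f j.castSucc x - f (Fin.last (m + 1)) x) *
      (f h.castSucc x - f (Fin.last (m + 1)) x) / mixDens f p x := by
  set q : Fin (m + 1) → ℝ → ℝ := fun i x => f i.castSucc x - f (Fin.last (m + 1)) x
  have hsq (v : Fin (m + 1) → ℝ) :
      Integrable fun x => (∑ i, v i * q i x) ^ 2 / mixDens f p x := by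
    simpa only [Fin.sum_snoc_neg_sum_mul] using
      integrable_sq_sum_mul_div_mixDens hf hint hp (Fin.snoc v (-∑ i, v i))
  have hsingle (i : Fin (m + 1)) (x : ℝ) :
      ∑ i', (Pi.single i 1 : Fin (m + 1) → ℝ) i' * q i' x = q i x := by
    simp [Pi.single_apply]
  -- polarization: `2ab = (a + b)² - a² - b²`
  convert ((hsq (Pi.single j 1 + Pi.single h 1)).sub
    ((hsq (Pi.single j 1)).add (hsq (Pi.single h 1)))).div_const 2 using 1
  ext x
  simp only [Pi.sub_apply, Pi.add_apply, add_mul, Finset.sum_add_distrib, hsingle, q]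
  ring

lemma dotProduct_weightFisher_mulVec (hf : ∀ ℓ x, 0 ≤ f ℓ x)
    (hint : ∀ ℓ, Integrable (f ℓ)) (hp : ∀ ℓ, 0 < p ℓ) (v : Fin (m + 1) → ℝ) :
    v ⬝ᵥ weightFisher f p *ᵥ v =
      ∫ x, (∑ j, v j * (f j.castSucc x - f (Fin.last (m + 1)) x)) ^ 2 / mixDens f p x := by
  set q : Fin (m + 1) → ℝ → ℝ := fun i x => f i.castSucc x - f (Fin.last (m + 1)) x
  have hE (j h : Fin (m + 1)) :
      Integrable fun x => v j * v h * (q j x * q h x / mixDens f p x) :=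
    (integrable_weightFisher_integrand hf hint hp j h).const_mul _
  calc v ⬝ᵥ weightFisher f p *ᵥ v
      = ∑ j, ∑ h, ∫ x, v j * v h * (q j x * q h x / mixDens f p x) := by
        simp only [dotProduct, mulVec, Finset.mul_sum, integral_const_mul]
        exact Finset.sum_congr rfl fun j _ => Finset.sum_congr rfl fun h _ => by
          rw [weightFisher]; ring
    _ = ∫ x, ∑ j, ∑ h, v j * v h * (q j x * q h x / mixDens f p x) := by
        rw [integral_finsetSum _ fun j _ => integrable_finsetSum _ fun h _ => hE j h]
        exact Finset.sum_congr rfl fun j _ => (integral_finsetSum _ fun h _ => hE j h).symm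
    _ = ∫ x, (∑ j, v j * q j x) ^ 2 / mixDens f p x := by
        congr 1 with x
        rw [sq, Finset.sum_mul_sum, Finset.sum_div]
        exact Finset.sum_congr rfl fun j _ => by
          rw [Finset.sum_div]; exact Finset.sum_congr rfl fun h _ => by ring

lemma weightFisher_isHermitian : (weightFisher f p).IsHermitian :=
  IsHermitian.ext fun j h => by
    simp only [weightFisher, star_trivial]
    simp_rw [mul_comm (f j.castSucc _ - _)]

lemma weightFisher_nonneg (hf : ∀ ℓ x, 0 ≤ f ℓ x) (hint : ∀ ℓ, Integrable (f ℓ))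
    (hp : ∀ ℓ, 0 < p ℓ) : 0 ≤ weightFisher f p := by
  refine nonneg_iff_posSemidef.mpr <|
    PosSemidef.of_dotProduct_mulVec_nonneg weightFisher_isHermitian fun v => ?_
  rw [star_trivial, dotProduct_weightFisher_mulVec hf hint hp]
  exact integral_nonneg fun x =>
    div_nonneg (sq_nonneg _) (mixDens_nonneg hf (fun ℓ => (hp ℓ).le) x)

lemma weightFisher_le_categoricalFisher (hf : ∀ ℓ x, 0 ≤ f ℓ x)
    (hpdf : ∀ ℓ, ∫ x, f ℓ x = 1) (hp : ∀ ℓ, 0 < p ℓ) :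
    weightFisher f p ≤ categoricalFisher p := by
  have hint : ∀ ℓ, Integrable (f ℓ) := fun ℓ => .of_integral_ne_zero (by simp [hpdf ℓ])
  refine PosSemidef.of_dotProduct_mulVec_nonneg
    ((categoricalFisher_posDef hp).isHermitian.sub weightFisher_isHermitian) fun v => ?_
  rw [star_trivial, sub_mulVec, dotProduct_sub, sub_nonneg,
    dotProduct_weightFisher_mulVec hf hint hp, dotProduct_categoricalFisher_mulVec]
  simpa only [Fin.sum_snoc_neg_sum_mul] using
    integral_sq_sum_mul_div_mixDens_le hf hpdf hp (Fin.snoc v (-∑ j, v j))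

end WeightFisher

theorem weightFisher_det_le_dirichlet_general (m : ℕ) (f : Fin (m + 2) → ℝ → ℝ)
    (hnonneg : ∀ ℓ x, 0 ≤ f ℓ x)
    (hpdf : ∀ ℓ, ∫ x : ℝ, f ℓ x = 1)
    (p : Fin (m + 2) → ℝ) (hp : ∀ ℓ, 0 < p ℓ ∧ p ℓ < 1) (hsum : ∑ ℓ, p ℓ = 1) :
    (weightFisher f p).det ≤ (∏ ℓ, p ℓ)⁻¹ ∧
      Real.sqrt (weightFisher f p).det ≤ ∏ ℓ, p ℓ ^ (-(1 : ℝ) / 2) := by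
  have hpos : ∀ ℓ, 0 < p ℓ := fun ℓ => (hp ℓ).1
  have hint : ∀ ℓ, Integrable (f ℓ) := fun ℓ => .of_integral_ne_zero (by simp [hpdf ℓ])
  have hdet : (weightFisher f p).det ≤ (∏ ℓ, p ℓ)⁻¹ := by
    rw [← det_categoricalFisher (fun ℓ => (hpos ℓ).ne') hsum]
    exact det_le_det_of_le (weightFisher_nonneg hnonneg hint hpos)
      (categoricalFisher_posDef hpos) (weightFisher_le_categoricalFisher hnonneg hpdf hpos)
  refine ⟨hdet, ?_⟩
  rw [← Real.sqrt_inv_prod_eq_prod_rpow_neg_half _ fun ℓ _ => (hpos ℓ).le]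
  exact Real.sqrt_le_sqrt hdet

/-- for a mixture of `m + 2 ≥ 2` measurable probability densities and
`p` in the open simplex, `det M(p) ≤ (p₀ ⋯ p_{k-1})⁻¹`, hence
`√(det M(p)) ≤ ∏ ℓ pℓ^{-1/2}`, the unnormalized Dirichlet `𝒟(1/2,…,1/2)` density. -/
theorem weightFisher_det_le_dirichlet (m : ℕ) (f : Fin (m + 2) → ℝ → ℝ)
    (hmeas : ∀ ℓ, Measurable (f ℓ)) (hnonneg : ∀ ℓ x, 0 ≤ f ℓ x)
    (hpdf : ∀ ℓ, ∫ x : ℝ, f ℓ x = 1)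
    (p : Fin (m + 2) → ℝ) (hp : ∀ ℓ, 0 < p ℓ ∧ p ℓ < 1) (hsum : ∑ ℓ, p ℓ = 1) :
    (weightFisher f p).det ≤ (∏ ℓ, p ℓ)⁻¹ ∧
      Real.sqrt (weightFisher f p).det ≤ ∏ ℓ, p ℓ ^ (-(1 : ℝ) / 2) :=
  weightFisher_det_le_dirichlet_general m f hnonneg hpdf p hp hsum
end
end

section
/- Let f₁ and f₂ be measurable probability density functions on ℝ and let p ∈ (0,1). Then the one-dimensional Fisher information for the weight of the two-component mixture, I(p) = ∫_ℝ (f₁(x) − f₂(x))² / (p f₁(x) + (1−p) f₂(x)) dx (integrand taken 0 where the denominator vanishes), satisfies I(p) ≤ 1/(p(1−p)). -/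
open MeasureTheory

noncomputable section

/-- Fisher information for the weight `p` of the two-component mixture
`p f₁ + (1-p) f₂`, the integrand being zero where the mixture density vanishes. -/
def weightFisher2 (f₁ f₂ : ℝ → ℝ) (p : ℝ) : ℝ :=
  ∫ x : ℝ, (f₁ x - f₂ x) ^ 2 / (p * f₁ x + (1 - p) * f₂ x)

/-!
Pointwise, for `a, b ≥ 0` and `p, q > 0`,
`(p a + q b) (a / p + b / q) = a² + b² + (q / p + p / q) a b ≥ (a + b)² ≥ (a - b)²` by AM–GM.
Hence the integrand of `I(p)` is dominated by `f₁ / p + f₂ / (1 - p)`, whose integral is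
`1 / p + 1 / (1 - p) = 1 / (p (1 - p))`.
-/

theorem sq_sub_div_le_div_add_div {a b p q : ℝ} (ha : 0 ≤ a) (hb : 0 ≤ b)
    (hp : 0 < p) (hq : 0 < q) : (a - b) ^ 2 / (p * a + q * b) ≤ a / p + b / q := by
  rcases (by positivity : 0 ≤ p * a + q * b).eq_or_lt with hzero | hpos
  · rw [← hzero, div_zero]
    positivity
  have hexpand :
      (p * a + q * b) * (a / p + b / q) = a ^ 2 + b ^ 2 + (q / p + p / q) * (a * b) := by
    field_simp
    ring
  have hamgm : 2 ≤ q / p + p / q := by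
    rw [div_add_div _ _ hp.ne' hq.ne', le_div_iff₀ (by positivity)]
    nlinarith [sq_nonneg (q - p)]
  rw [div_le_iff₀ hpos, mul_comm, hexpand]
  nlinarith [mul_nonneg ha hb]

theorem integral_sq_sub_div_le_inv_add_inv {α : Type*} [MeasurableSpace α] {μ : Measure α}
    {f₁ f₂ : α → ℝ} (hf₁ : ∀ x, 0 ≤ f₁ x) (hf₂ : ∀ x, 0 ≤ f₂ x)
    (hint₁ : ∫ x, f₁ x ∂μ = 1) (hint₂ : ∫ x, f₂ x ∂μ = 1) {p q : ℝ} (hp : 0 < p) (hq : 0 < q) :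
    ∫ x, (f₁ x - f₂ x) ^ 2 / (p * f₁ x + q * f₂ x) ∂μ ≤ p⁻¹ + q⁻¹ := by
  have hi₁ := (integrable_of_integral_eq_one hint₁).div_const p
  have hi₂ := (integrable_of_integral_eq_one hint₂).div_const q
  calc ∫ x, (f₁ x - f₂ x) ^ 2 / (p * f₁ x + q * f₂ x) ∂μ
      ≤ ∫ x, (f₁ x / p + f₂ x / q) ∂μ :=
        integral_mono_of_nonneg (.of_forall fun x ↦ by have := hf₁ x; have := hf₂ x; positivity)
          (hi₁.add hi₂) (.of_forall fun x ↦ sq_sub_div_le_div_add_div (hf₁ x) (hf₂ x) hp hq)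
    _ = p⁻¹ + q⁻¹ := by
        rw [integral_add hi₁ hi₂, integral_div, integral_div, hint₁, hint₂, one_div, one_div]

theorem weightFisher2_le_general (f₁ f₂ : ℝ → ℝ)
    (hnonneg₁ : ∀ x, 0 ≤ f₁ x) (hnonneg₂ : ∀ x, 0 ≤ f₂ x)
    (hpdf₁ : ∫ x : ℝ, f₁ x = 1) (hpdf₂ : ∫ x : ℝ, f₂ x = 1)
    (p : ℝ) (hp : p ∈ Set.Ioo (0 : ℝ) 1) :
    weightFisher2 f₁ f₂ p ≤ 1 / (p * (1 - p)) := by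
  obtain ⟨hp₀, hp₁⟩ := hp
  have hq₀ : 0 < 1 - p := sub_pos.mpr hp₁
  calc weightFisher2 f₁ f₂ p ≤ p⁻¹ + (1 - p)⁻¹ :=
        integral_sq_sub_div_le_inv_add_inv hnonneg₁ hnonneg₂ hpdf₁ hpdf₂ hp₀ hq₀
    _ = 1 / (p * (1 - p)) := by
        field_simp
        ring

/-- for measurable probability densities `f₁, f₂` on `ℝ` and
`p ∈ (0,1)`, the Fisher information for the mixture weight satisfies
`I(p) ≤ 1 / (p (1 - p))`. -/
theorem weightFisher2_le (f₁ f₂ : ℝ → ℝ)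
    (hmeas₁ : Measurable f₁) (hmeas₂ : Measurable f₂)
    (hnonneg₁ : ∀ x, 0 ≤ f₁ x) (hnonneg₂ : ∀ x, 0 ≤ f₂ x)
    (hpdf₁ : ∫ x : ℝ, f₁ x = 1) (hpdf₂ : ∫ x : ℝ, f₂ x = 1)
    (p : ℝ) (hp : p ∈ Set.Ioo (0 : ℝ) 1) :
    weightFisher2 f₁ f₂ p ≤ 1 / (p * (1 - p)) :=
  weightFisher2_le_general f₁ f₂ hnonneg₁ hnonneg₂ hpdf₁ hpdf₂ p hp
end
end

section
/- Let f₁ and f₂ be measurable probability density functions on ℝ. Then the Jeffreys prior for the weight of the two-component mixture, π^J(p) = √(I(p)), is proper, with ∫₀¹ √(I(p)) dp ≤ π (the constant pi), where I(p) = ∫_ℝ (f₁(x) − f₂(x))² / (p f₁(x) + (1−p) f₂(x)) dx. -/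
/-! Pointwise, `(f₁ - f₂)² / (p f₁ + (1-p) f₂) ≤ f₁ / p + f₂ / (1-p)`, so for probability densities
`I(p) ≤ 1/p + 1/(1-p) = 1/(p(1-p))`. Hence `√I(p) ≤ 1/√(p(1-p))`, which is the derivative of
`arcsin (2p - 1)` and integrates to `π` over `(0, 1)`. -/

open MeasureTheory

noncomputable section

open Real Set

lemma sq_sub_div_mix_le_add_div {a b p : ℝ} (ha : 0 ≤ a) (hb : 0 ≤ b) (hp₀ : 0 < p)
    (hp₁ : p < 1) : (a - b) ^ 2 / (p * a + (1 - p) * b) ≤ a / p + b / (1 - p) := by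
  have hq : 0 < 1 - p := by linarith
  rcases (by positivity : 0 ≤ p * a + (1 - p) * b).eq_or_lt with hmix | hmix
  · rw [← hmix, div_zero]
    positivity
  · rw [div_add_div _ _ hp₀.ne' hq.ne', div_le_div_iff₀ hmix (by positivity)]
    nlinarith [mul_nonneg ha hb, mul_nonneg (mul_nonneg ha hb) (sq_nonneg (1 - 2 * p)),
      mul_pos hp₀ hq]

lemma weightFisher2_le_s4 {f₁ f₂ : ℝ → ℝ} (hf₁ : Integrable f₁) (hf₂ : Integrable f₂)
    (h₁ : ∀ x, 0 ≤ f₁ x) (h₂ : ∀ x, 0 ≤ f₂ x) {p : ℝ} (hp₀ : 0 < p) (hp₁ : p < 1) :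
    weightFisher2 f₁ f₂ p ≤ (∫ x, f₁ x) / p + (∫ x, f₂ x) / (1 - p) := by
  have hsum : Integrable fun x => f₁ x / p + f₂ x / (1 - p) :=
    (hf₁.div_const p).add (hf₂.div_const _)
  rw [← integral_div, ← integral_div, ← integral_add (hf₁.div_const p) (hf₂.div_const _)]
  -- a non-integrable integrand has integral `0`, so only the upper bound must be integrable
  refine integral_mono_of_nonneg (.of_forall fun x => ?_) hsum
    (.of_forall fun x => sq_sub_div_mix_le_add_div (h₁ x) (h₂ x) hp₀ hp₁)
  have := h₁ x
  have := h₂ x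
  positivity

lemma sqrt_weightFisher2_le {f₁ f₂ : ℝ → ℝ} (h₁ : ∀ x, 0 ≤ f₁ x) (h₂ : ∀ x, 0 ≤ f₂ x)
    (hpdf₁ : ∫ x, f₁ x = 1) (hpdf₂ : ∫ x, f₂ x = 1) {p : ℝ} (hp₀ : 0 < p) (hp₁ : p < 1) :
    √(weightFisher2 f₁ f₂ p) ≤ (√(p * (1 - p)))⁻¹ := by
  have hint₁ : Integrable f₁ := .of_integral_ne_zero (by simp [hpdf₁])
  have hint₂ : Integrable f₂ := .of_integral_ne_zero (by simp [hpdf₂])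
  rw [← sqrt_inv]
  refine sqrt_le_sqrt ((weightFisher2_le_s4 hint₁ hint₂ h₁ h₂ hp₀ hp₁).trans_eq ?_)
  rw [hpdf₁, hpdf₂]
  field_simp [(by linarith : 1 - p ≠ 0)]
  ring

lemma aestronglyMeasurable_weightFisher2 {f₁ f₂ : ℝ → ℝ} (hf₁ : AEStronglyMeasurable f₁)
    (hf₂ : AEStronglyMeasurable f₂) (μ : Measure ℝ) :
    AEStronglyMeasurable (weightFisher2 f₁ f₂) μ := by
  have g₁ : AEMeasurable (fun z : ℝ × ℝ => f₁ z.2) (μ.prod volume) := hf₁.comp_snd.aemeasurable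
  have g₂ : AEMeasurable (fun z : ℝ × ℝ => f₂ z.2) (μ.prod volume) := hf₂.comp_snd.aemeasurable
  have hp : AEMeasurable (fun z : ℝ × ℝ => z.1) (μ.prod volume) := measurable_fst.aemeasurable
  exact AEStronglyMeasurable.integral_prod_right'
    (f := fun z : ℝ × ℝ => (f₁ z.2 - f₂ z.2) ^ 2 / (z.1 * f₁ z.2 + (1 - z.1) * f₂ z.2))
    (((g₁.sub g₂).pow_const 2).div
      ((hp.mul g₁).add ((aemeasurable_const.sub hp).mul g₂))).aestronglyMeasurable

lemma hasDerivAt_arcsin_two_mul_sub_one {p : ℝ} (hp₀ : 0 < p) (hp₁ : p < 1) :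
    HasDerivAt (fun q => arcsin (2 * q - 1)) (√(p * (1 - p)))⁻¹ p := by
  have hd := (hasDerivAt_arcsin (by linarith : 2 * p - 1 ≠ -1) (by linarith : 2 * p - 1 ≠ 1)).comp
    p (((hasDerivAt_id p).const_mul 2).sub_const 1)
  have hsqrt : √(1 - (2 * p - 1) ^ 2) = 2 * √(p * (1 - p)) := by
    rw [show 1 - (2 * p - 1) ^ 2 = 2 ^ 2 * (p * (1 - p)) by ring, sqrt_mul (by positivity),
      sqrt_sq zero_le_two]
  have hpos : 0 < √(p * (1 - p)) := sqrt_pos.2 (mul_pos hp₀ (by linarith))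
  refine hd.congr_deriv ?_
  rw [hsqrt]
  field_simp

lemma continuousOn_arcsin_two_mul_sub_one :
    ContinuousOn (fun q => arcsin (2 * q - 1)) (Icc 0 1) :=
  (continuous_arcsin.comp (by fun_prop)).continuousOn

lemma integrableOn_inv_sqrt_mul_one_sub :
    IntegrableOn (fun p => (√(p * (1 - p)))⁻¹) (Ioc 0 1) :=
  intervalIntegral.integrableOn_deriv_of_nonneg continuousOn_arcsin_two_mul_sub_one
    (fun _ hp => hasDerivAt_arcsin_two_mul_sub_one hp.1 hp.2) (fun _ _ => by positivity)

lemma integral_inv_sqrt_mul_one_sub : ∫ p in (0 : ℝ)..1, (√(p * (1 - p)))⁻¹ = π := by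
  rw [intervalIntegral.integral_eq_sub_of_hasDerivAt_of_le zero_le_one
    continuousOn_arcsin_two_mul_sub_one (fun _ hp => hasDerivAt_arcsin_two_mul_sub_one hp.1 hp.2)
    ((intervalIntegrable_iff_integrableOn_Ioc_of_le zero_le_one).2
      integrableOn_inv_sqrt_mul_one_sub)]
  norm_num

theorem jeffreys_prior_weight2_proper_general (f₁ f₂ : ℝ → ℝ)
    (hnonneg₁ : ∀ x, 0 ≤ f₁ x) (hnonneg₂ : ∀ x, 0 ≤ f₂ x)
    (hpdf₁ : ∫ x : ℝ, f₁ x = 1) (hpdf₂ : ∫ x : ℝ, f₂ x = 1) :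
    IntegrableOn (fun p => Real.sqrt (weightFisher2 f₁ f₂ p)) (Set.Ioo (0 : ℝ) 1) volume ∧
      ∫ p in Set.Ioo (0 : ℝ) 1, Real.sqrt (weightFisher2 f₁ f₂ p) ≤ Real.pi := by
  have hint₁ : Integrable f₁ := .of_integral_ne_zero (by simp [hpdf₁])
  have hint₂ : Integrable f₂ := .of_integral_ne_zero (by simp [hpdf₂])
  have hdom : IntegrableOn (fun p => (√(p * (1 - p)))⁻¹) (Ioo 0 1) :=
    integrableOn_inv_sqrt_mul_one_sub.mono_set Ioo_subset_Ioc_self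
  have hbound : ∀ p ∈ Ioo (0 : ℝ) 1, √(weightFisher2 f₁ f₂ p) ≤ (√(p * (1 - p)))⁻¹ :=
    fun p hp => sqrt_weightFisher2_le hnonneg₁ hnonneg₂ hpdf₁ hpdf₂ hp.1 hp.2
  have hint : IntegrableOn (fun p => √(weightFisher2 f₁ f₂ p)) (Ioo 0 1) :=
    hdom.mono' (continuous_sqrt.comp_aestronglyMeasurable
        (aestronglyMeasurable_weightFisher2 hint₁.1 hint₂.1 _))
      ((ae_restrict_iff' measurableSet_Ioo).2 (.of_forall fun p hp => by
        rw [norm_of_nonneg (sqrt_nonneg _)]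
        exact hbound p hp))
  refine ⟨hint, ?_⟩
  calc ∫ p in Ioo 0 1, √(weightFisher2 f₁ f₂ p)
      ≤ ∫ p in Ioo 0 1, (√(p * (1 - p)))⁻¹ := setIntegral_mono_on hint hdom measurableSet_Ioo hbound
    _ = π := by
      rw [← integral_Ioc_eq_integral_Ioo, ← intervalIntegral.integral_of_le zero_le_one,
        integral_inv_sqrt_mul_one_sub]

/-- for measurable probability densities `f₁, f₂` on `ℝ`, the Jeffreys
prior `p ↦ √(I(p))` for the weight of the two-component mixture is proper, with
`∫₀¹ √(I(p)) dp ≤ π`. -/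
theorem jeffreys_prior_weight2_proper (f₁ f₂ : ℝ → ℝ)
    (hmeas₁ : Measurable f₁) (hmeas₂ : Measurable f₂)
    (hnonneg₁ : ∀ x, 0 ≤ f₁ x) (hnonneg₂ : ∀ x, 0 ≤ f₂ x)
    (hpdf₁ : ∫ x : ℝ, f₁ x = 1) (hpdf₂ : ∫ x : ℝ, f₂ x = 1) :
    IntegrableOn (fun p => Real.sqrt (weightFisher2 f₁ f₂ p)) (Set.Ioo (0 : ℝ) 1) volume ∧
      ∫ p in Set.Ioo (0 : ℝ) 1, Real.sqrt (weightFisher2 f₁ f₂ p) ≤ Real.pi :=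
  jeffreys_prior_weight2_proper_general f₁ f₂ hnonneg₁ hnonneg₂ hpdf₁ hpdf₂
end
end

section
/- Let f₁ and f₂ be measurable probability density functions on ℝ. Then the Fisher information for the weight of the two-component mixture, p ↦ I(p) = ∫_ℝ (f₁(x) − f₂(x))² / (p f₁(x) + (1−p) f₂(x)) dx, is a convex function of p on the open interval (0,1). -/
/-!
For each `x`, the integrand `t ↦ (f₁ x - f₂ x)² / (t f₁ x + (1 - t) f₂ x)` is a nonnegative
multiple of the reciprocal of an affine function of `t` that is positive on `(0, 1)`, hence
convex there. Convexity passes to the integral once every integrand is integrable, which follows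
from the pointwise bound `(a - b)² / (t a + (1 - t) b) ≤ a / t + b / (1 - t)`.
-/

open MeasureTheory

noncomputable section

open Set

lemma mixture_pos {a b t : ℝ} (ha : 0 ≤ a) (hb : 0 ≤ b) (hab : 0 < a + b)
    (ht : t ∈ Ioo (0 : ℝ) 1) : 0 < t * a + (1 - t) * b := by
  nlinarith [mul_pos (mul_pos ht.1 (sub_pos.2 ht.2)) hab,
    mul_nonneg (sq_nonneg t) ha, mul_nonneg (sq_nonneg (1 - t)) hb]

theorem convexOn_sq_sub_div_mixture {a b : ℝ} (ha : 0 ≤ a) (hb : 0 ≤ b) :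
    ConvexOn ℝ (Ioo 0 1) fun t => (a - b) ^ 2 / (t * a + (1 - t) * b) := by
  rcases (add_nonneg ha hb).eq_or_lt with hab | hab
  · obtain ⟨rfl, rfl⟩ : a = 0 ∧ b = 0 := ⟨by linarith, by linarith⟩
    simpa using convexOn_const (0 : ℝ) (convex_Ioo (0 : ℝ) 1)
  · have hinv : ConvexOn ℝ (Ioi 0) fun y : ℝ => (a - b) ^ 2 • y ^ (-1 : ℤ) :=
      (convexOn_zpow (-1)).smul (sq_nonneg _)
    refine ((hinv.comp_affineMap (AffineMap.lineMap b a)).subset (fun t ht => ?_)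
      (convex_Ioo 0 1)).congr fun t _ => ?_
    · simpa [AffineMap.lineMap_apply_module, add_comm] using mixture_pos ha hb hab ht
    · simp [AffineMap.lineMap_apply_module, div_eq_mul_inv, add_comm]

lemma sq_sub_div_mixture_le {a b t : ℝ} (ha : 0 ≤ a) (hb : 0 ≤ b) (ht : t ∈ Ioo (0 : ℝ) 1) :
    (a - b) ^ 2 / (t * a + (1 - t) * b) ≤ a / t + b / (1 - t) := by
  have ht' : 0 < 1 - t := sub_pos.2 ht.2
  rcases (add_nonneg (mul_nonneg ht.1.le ha) (mul_nonneg ht'.le hb)).eq_or_lt with hmix | hmix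
  · rw [← hmix, div_zero]
    exact add_nonneg (div_nonneg ha ht.1.le) (div_nonneg hb ht'.le)
  · have hexpand : (a / t + b / (1 - t)) * (t * a + (1 - t) * b)
        = a ^ 2 + b ^ 2 + a * b * ((1 - t) / t + t / (1 - t)) := by
      field_simp [ht.1.ne', ht'.ne']
      ring
    rw [div_le_iff₀ hmix, hexpand]
    nlinarith [mul_nonneg (mul_nonneg ha hb)
      (add_nonneg (div_nonneg ht'.le ht.1.le) (div_nonneg ht.1.le ht'.le))]

theorem integrable_sq_sub_div_mixture {α : Type*} [MeasurableSpace α] {μ : Measure α}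
    {f₁ f₂ : α → ℝ} (hf₁ : Integrable f₁ μ) (hf₂ : Integrable f₂ μ)
    (h₁ : ∀ x, 0 ≤ f₁ x) (h₂ : ∀ x, 0 ≤ f₂ x) {t : ℝ} (ht : t ∈ Ioo (0 : ℝ) 1) :
    Integrable (fun x => (f₁ x - f₂ x) ^ 2 / (t * f₁ x + (1 - t) * f₂ x)) μ := by
  refine ((hf₁.div_const t).add (hf₂.div_const (1 - t))).mono' ?_
    (ae_of_all _ fun x => ?_)
  · refine (((hf₁.aemeasurable.sub hf₂.aemeasurable).pow_const 2).div ?_).aestronglyMeasurable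
    exact (hf₁.aemeasurable.const_mul t).add (hf₂.aemeasurable.const_mul (1 - t))
  · have hmix : 0 ≤ t * f₁ x + (1 - t) * f₂ x :=
      add_nonneg (mul_nonneg ht.1.le (h₁ x)) (mul_nonneg (sub_pos.2 ht.2).le (h₂ x))
    rw [Real.norm_of_nonneg (div_nonneg (sq_nonneg _) hmix)]
    exact sq_sub_div_mixture_le (h₁ x) (h₂ x) ht

theorem weightFisher2_convexOn_general (f₁ f₂ : ℝ → ℝ)
    (hnonneg₁ : ∀ x, 0 ≤ f₁ x) (hnonneg₂ : ∀ x, 0 ≤ f₂ x)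
    (hpdf₁ : ∫ x : ℝ, f₁ x = 1) (hpdf₂ : ∫ x : ℝ, f₂ x = 1) :
    ConvexOn ℝ (Set.Ioo (0 : ℝ) 1) (weightFisher2 f₁ f₂) := by
  have hint₁ : Integrable f₁ := .of_integral_ne_zero (by simp [hpdf₁])
  have hint₂ : Integrable f₂ := .of_integral_ne_zero (by simp [hpdf₂])
  exact integral_convexOn_of_integrand_ae (convex_Ioo 0 1)
    (ae_of_all _ fun x => convexOn_sq_sub_div_mixture (hnonneg₁ x) (hnonneg₂ x))
    fun t ht => integrable_sq_sub_div_mixture hint₁ hint₂ hnonneg₁ hnonneg₂ ht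

/-- for measurable probability densities `f₁, f₂` on `ℝ`, the Fisher
information `p ↦ I(p)` for the weight of the two-component mixture is a convex
function of `p` on the open interval `(0,1)`. -/
theorem weightFisher2_convexOn (f₁ f₂ : ℝ → ℝ)
    (hmeas₁ : Measurable f₁) (hmeas₂ : Measurable f₂)
    (hnonneg₁ : ∀ x, 0 ≤ f₁ x) (hnonneg₂ : ∀ x, 0 ≤ f₂ x)
    (hpdf₁ : ∫ x : ℝ, f₁ x = 1) (hpdf₂ : ∫ x : ℝ, f₂ x = 1) :
    ConvexOn ℝ (Set.Ioo (0 : ℝ) 1) (weightFisher2 f₁ f₂) :=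
  weightFisher2_convexOn_general f₁ f₂ hnonneg₁ hnonneg₂ hpdf₁ hpdf₂
end
end

section
/- Fix k ≥ 2, weights p₁, …, p_k > 0 with Σ_ℓ p_ℓ = 1, and standard deviations σ₁, …, σ_k > 0. Then the Jeffreys prior on the means of the Gaussian mixture, π^J(μ) = √(det I(μ)), satisfies: ∫_{ℝ^k} √(det I(μ)) dμ ∈ {0, +∞}. In particular, the Jeffreys prior for the means is improper: it can never be normalized into a probability density on ℝ^k. -/
/-! The mean Fisher matrix only depends on the differences of the means: shifting all means by
the same `t` amounts to the change of variables `x ↦ x + t` in every entry. Hence the Jeffreys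
density `√(det I(μ))` is periodic along the diagonal of `ℝ^k`, and so is invariant under integer
diagonal shifts. Cutting `ℝ^k` into the slabs `n ≤ μ₀ < n + 1`, `n ∈ ℤ`, these shifts carry one
slab onto another, so all slabs carry the same mass `c`, and the total mass is `∑_{n ∈ ℤ} c`,
which is `0` or `∞`. -/

open MeasureTheory Set

noncomputable section

/-- Density of a centered Gaussian with standard deviation `σ`. -/
def gaussPdf (σ x : ℝ) : ℝ :=
  (Real.sqrt (2 * Real.pi * σ ^ 2))⁻¹ * Real.exp (-(x ^ 2) / (2 * σ ^ 2))

/-- Gaussian mixture density `g(x; μ) = ∑ ℓ pℓ φ_{σℓ}(x - μℓ)`. -/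
def gaussMix {k : ℕ} (p σ μ : Fin k → ℝ) (x : ℝ) : ℝ :=
  ∑ ℓ, p ℓ * gaussPdf (σ ℓ) (x - μ ℓ)

/-- Mean Fisher matrix of the Gaussian mixture with fixed weights `p` and scales `σ`. -/
def meanFisher {k : ℕ} (p σ μ : Fin k → ℝ) : Matrix (Fin k) (Fin k) ℝ := fun j h =>
  p j * p h / (σ j ^ 2 * σ h ^ 2) *
    ∫ x : ℝ,
      (x - μ j) * (x - μ h) * gaussPdf (σ j) (x - μ j) * gaussPdf (σ h) (x - μ h) /
        gaussMix p σ μ x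

section Periodic

variable {E : Type*} [AddCommGroup E] {v : E} (ℓ : E →+ ℝ) (hℓv : ℓ v = 1)

include hℓv in
lemma preimage_add_zsmul_slab (n : ℤ) :
    (· + n • v) ⁻¹' (ℓ ⁻¹' Ico (n : ℝ) (n + 1)) = ℓ ⁻¹' Ico 0 1 := by
  ext x
  simp only [mem_preimage, mem_Ico, map_add, map_zsmul, hℓv, zsmul_one]
  constructor <;> rintro ⟨h₀, h₁⟩ <;> constructor <;> linarith

variable [MeasurableSpace E] (μ : Measure E) (hℓ : Measurable ℓ)

include hℓ in
lemma lintegral_eq_tsum_slab (f : E → ENNReal) :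
    ∫⁻ x, f x ∂μ = ∑' n : ℤ, ∫⁻ x in ℓ ⁻¹' Ico (n : ℝ) (n + 1), f x ∂μ := by
  rw [← lintegral_iUnion (fun n => hℓ measurableSet_Ico)
      (fun a b hab => (pairwise_disjoint_Ico_intCast ℝ hab).preimage ℓ),
    ← preimage_iUnion, iUnion_Ico_intCast, preimage_univ, Measure.restrict_univ]

variable [MeasurableAdd E] [μ.IsAddRightInvariant] {f : E → ENNReal}

include hℓv in
lemma setLIntegral_slab_of_periodic (hf : Function.Periodic f v) (n : ℤ) :
    ∫⁻ x in ℓ ⁻¹' Ico (n : ℝ) (n + 1), f x ∂μ = ∫⁻ x in ℓ ⁻¹' Ico 0 1, f x ∂μ := by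
  rw [← (measurePreserving_add_right μ (n • v)).setLIntegral_comp_preimage_emb
      (measurableEmbedding_addRight _), preimage_add_zsmul_slab ℓ hℓv]
  exact lintegral_congr (hf.zsmul n)

include hℓ hℓv in
theorem lintegral_eq_zero_or_top_of_periodic (hf : Function.Periodic f v) :
    ∫⁻ x, f x ∂μ = 0 ∨ ∫⁻ x, f x ∂μ = ⊤ := by
  rw [lintegral_eq_tsum_slab ℓ μ hℓ]
  simp only [setLIntegral_slab_of_periodic ℓ hℓv μ hf]
  by_cases hc : ∫⁻ x in ℓ ⁻¹' Ico 0 1, f x ∂μ = 0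
  · simp [hc]
  · exact .inr (ENNReal.tsum_const_eq_top_of_ne_zero hc)

end Periodic

lemma gaussMix_add_const {k : ℕ} (p σ μ : Fin k → ℝ) (t x : ℝ) :
    gaussMix p σ (fun i => μ i + t) (x + t) = gaussMix p σ μ x := by
  simp only [gaussMix, add_sub_add_right_eq_sub]

lemma meanFisher_add_const {k : ℕ} (p σ μ : Fin k → ℝ) (t : ℝ) :
    meanFisher p σ (fun i => μ i + t) = meanFisher p σ μ := by
  ext j h
  simp only [meanFisher]
  congr 1
  rw [← integral_add_right_eq_self _ t]
  simp only [add_sub_add_right_eq_sub, gaussMix_add_const]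

theorem jeffreys_means_improper_general (m : ℕ) (p σ : Fin (m + 2) → ℝ) :
    (∫⁻ μ : Fin (m + 2) → ℝ,
        ENNReal.ofReal (Real.sqrt (meanFisher p σ μ).det)) = 0 ∨
    (∫⁻ μ : Fin (m + 2) → ℝ,
        ENNReal.ofReal (Real.sqrt (meanFisher p σ μ).det)) = ⊤ := by
  have hperiodic : Function.Periodic
      (fun μ : Fin (m + 2) → ℝ => ENNReal.ofReal (Real.sqrt (meanFisher p σ μ).det))
      (fun _ => 1) := fun μ => by
    simp only [Pi.add_def, meanFisher_add_const]
  exact lintegral_eq_zero_or_top_of_periodic (μ := volume) (ℓ := Pi.evalAddMonoidHom _ 0)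
    (hℓ := measurable_pi_apply 0) (hℓv := rfl) hperiodic

/-- for a Gaussian mixture with `k = m + 2 ≥ 2` components, fixed positive
weights summing to one and fixed positive scales, the Jeffreys prior
`π^J(μ) = √(det I(μ))` on the means satisfies `∫_{ℝ^k} √(det I(μ)) dμ ∈ {0, +∞}`:
it can never be normalized into a probability density on `ℝ^k`. -/
theorem jeffreys_means_improper (m : ℕ) (p σ : Fin (m + 2) → ℝ)
    (hp : ∀ ℓ, 0 < p ℓ) (hsum : ∑ ℓ, p ℓ = 1) (hσ : ∀ ℓ, 0 < σ ℓ) :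
    (∫⁻ μ : Fin (m + 2) → ℝ,
        ENNReal.ofReal (Real.sqrt (meanFisher p σ μ).det)) = 0 ∨
    (∫⁻ μ : Fin (m + 2) → ℝ,
        ENNReal.ofReal (Real.sqrt (meanFisher p σ μ).det)) = ⊤ :=
  jeffreys_means_improper_general m p σ
end
end

section
/- Consider the reparametrized two-component Gaussian mixture density g(x; p, μ, τ, δ, σ) = p φ_τ(x − μ) + (1 − p) φ_{τσ}(x − μ − τδ), with parameter θ = (p, μ, τ, δ, σ) ∈ (0,1) × ℝ × (0,∞) × ℝ × (0,∞), and let I(θ) be its 5×5 Fisher information matrix with entries I_{ab}(θ) = ∫_ℝ (∂_a log g(x;θ))(∂_b log g(x;θ)) g(x;θ) dx (a, b ranging over the five parameters). Then det I(p, μ, τ, δ, σ) = τ^{−4} · det I(p, 0, 1, δ, σ). In particular the Jeffreys prior √(det I(θ)) is constant in the reference location μ and proportional to τ^{−2} in the reference scale τ, hence improper. -/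
/-!
In `(μ, τ)` the mixture is a location–scale family:
`g(x; p, μ, τ, δ, σ) = τ⁻¹ g((x - μ) / τ; p, 0, 1, δ, σ)`. So at `x = τ y + μ` the scores in
`p, δ, σ` equal the reference scores at `y`, while the scores in `μ, τ` are `τ⁻¹` times the
reference ones. The substitution `x = τ y + μ` in the Fisher integrals then gives
`I(θ) = D I(p, 0, 1, δ, σ) D` with `D = diag(1, τ⁻¹, τ⁻¹, 1, 1)`, whence the factor `τ⁻⁴`.
The resulting Jeffreys prior does not depend on `μ`, so its integral over `ℝ × (0, ∞)` is a
constant times the infinite Lebesgue measure of `ℝ`.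
-/

open MeasureTheory

noncomputable section

/-- Reparametrized two-component Gaussian mixture density of Mengersen–Robert:
`g(x; p, μ, τ, δ, σ) = p φ_τ(x - μ) + (1 - p) φ_{τσ}(x - μ - τδ)`. -/
def repMix (p μ τ δ σ x : ℝ) : ℝ :=
  p * gaussPdf τ (x - μ) + (1 - p) * gaussPdf (τ * σ) (x - μ - τ * δ)

/-- Score function `∂_a log g(x; θ)` for `θ = (p, μ, τ, δ, σ)`. -/
def repScore (a : Fin 5) (p μ τ δ σ x : ℝ) : ℝ :=
  if a = 0 then deriv (fun t => Real.log (repMix t μ τ δ σ x)) p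
  else if a = 1 then deriv (fun t => Real.log (repMix p t τ δ σ x)) μ
  else if a = 2 then deriv (fun t => Real.log (repMix p μ t δ σ x)) τ
  else if a = 3 then deriv (fun t => Real.log (repMix p μ τ t σ x)) δ
  else deriv (fun t => Real.log (repMix p μ τ δ t x)) σ

/-- The `5 × 5` Fisher information matrix of the reparametrized mixture, with
entries `I_{ab}(θ) = ∫ (∂_a log g)(∂_b log g) g dx`. -/
def repFisher (p μ τ δ σ : ℝ) : Matrix (Fin 5) (Fin 5) ℝ := fun a b =>
  ∫ x : ℝ, repScore a p μ τ δ σ x * repScore b p μ τ δ σ x * repMix p μ τ δ σ x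

open Real
open scoped ENNReal

lemma gaussPdf_nonneg (s x : ℝ) : 0 ≤ gaussPdf s x := by
  unfold gaussPdf
  positivity

lemma gaussPdf_pos {s : ℝ} (hs : s ≠ 0) (x : ℝ) : 0 < gaussPdf s x := by
  unfold gaussPdf
  have : 0 < 2 * π * s ^ 2 := by positivity
  positivity

lemma gaussPdf_mul_mul {τ : ℝ} (hτ : 0 < τ) (s z : ℝ) :
    gaussPdf (τ * s) (τ * z) = τ⁻¹ * gaussPdf s z := by
  have hvar : 2 * π * (τ * s) ^ 2 = τ ^ 2 * (2 * π * s ^ 2) := by ring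
  have hexp : -(τ * z) ^ 2 / (2 * (τ * s) ^ 2) = -z ^ 2 / (2 * s ^ 2) := by
    rw [mul_pow, mul_pow, ← mul_assoc, mul_comm 2 (τ ^ 2), mul_assoc, ← mul_neg,
      mul_div_mul_left _ _ (by positivity)]
  rw [gaussPdf, gaussPdf, hvar, hexp, sqrt_mul (sq_nonneg τ), sqrt_sq hτ.le, mul_inv, mul_assoc]

lemma differentiable_gaussPdf (s : ℝ) : Differentiable ℝ (gaussPdf s) := by
  unfold gaussPdf
  fun_prop

lemma repMix_pos {p τ : ℝ} (hp : p ∈ Set.Ioc (0 : ℝ) 1) (hτ : τ ≠ 0) (μ δ σ x : ℝ) :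
    0 < repMix p μ τ δ σ x := by
  have := mul_pos hp.1 (gaussPdf_pos hτ (x - μ))
  have := mul_nonneg (sub_nonneg.2 hp.2) (gaussPdf_nonneg (τ * σ) (x - μ - τ * δ))
  unfold repMix
  linarith

lemma repMix_affine {τ : ℝ} (hτ : 0 < τ) (p μ δ σ y : ℝ) :
    repMix p μ τ δ σ (τ * y + μ) = τ⁻¹ * repMix p 0 1 δ σ y := by
  have h₁ : τ * y + μ - μ = τ * y := by ring
  have h₂ : gaussPdf τ (τ * y) = τ⁻¹ * gaussPdf 1 y := by
    simpa using gaussPdf_mul_mul hτ 1 y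
  rw [repMix, repMix, h₁, ← mul_sub, h₂, gaussPdf_mul_mul hτ]
  simp only [sub_zero, one_mul]
  ring

def locScale (f : ℝ → ℝ) (μ τ x : ℝ) : ℝ := τ⁻¹ * f ((x - μ) / τ)

lemma repMix_eq_locScale {τ : ℝ} (hτ : 0 < τ) (p μ δ σ x : ℝ) :
    repMix p μ τ δ σ x = locScale (repMix p 0 1 δ σ) μ τ x := by
  rw [locScale, ← repMix_affine hτ, mul_div_cancel₀ _ hτ.ne', sub_add_cancel]

lemma differentiable_repMix (p μ τ δ σ : ℝ) : Differentiable ℝ (repMix p μ τ δ σ) := by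
  unfold repMix
  have := differentiable_gaussPdf
  fun_prop

lemma deriv_log_const_mul {g : ℝ → ℝ} {c t : ℝ} (hc : c ≠ 0) (hg : ∀ᶠ s in nhds t, g s ≠ 0) :
    deriv (fun s => log (c * g s)) t = deriv (fun s => log (g s)) t := by
  have h : (fun s => log (c * g s)) =ᶠ[nhds t] fun s => log c + log (g s) := by
    filter_upwards [hg] with s hs
    rw [log_mul hc hs]
  rw [h.deriv_eq, deriv_const_add]

section LocationScale

variable {f : ℝ → ℝ} {μ τ x : ℝ}

lemma hasDerivAt_log_locScale_location (hf : ∀ z, f z ≠ 0) (hτ : τ ≠ 0)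
    (hℓ : DifferentiableAt ℝ (fun z => log (f z)) ((x - μ) / τ)) :
    HasDerivAt (fun m => log (locScale f m τ x))
      (-τ⁻¹ * deriv (fun z => log (f z)) ((x - μ) / τ)) μ := by
  have hsplit : (fun m => log (locScale f m τ x))
      = fun m => log τ⁻¹ + log (f ((x - m) / τ)) := by
    funext m
    rw [locScale, log_mul (inv_ne_zero hτ) (hf _)]
  have hinner : HasDerivAt (fun m => (x - m) / τ) (-1 / τ) μ :=
    ((hasDerivAt_id μ).const_sub x).div_const τ
  rw [hsplit]
  have h := (hℓ.hasDerivAt.comp μ hinner).const_add (log τ⁻¹)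
  refine h.congr_deriv ?_
  ring

lemma hasDerivAt_log_locScale_scale (hf : ∀ z, f z ≠ 0) (hτ : τ ≠ 0)
    (hℓ : DifferentiableAt ℝ (fun z => log (f z)) ((x - μ) / τ)) :
    HasDerivAt (fun t => log (locScale f μ t x))
      (-τ⁻¹ * (1 + (x - μ) / τ * deriv (fun z => log (f z)) ((x - μ) / τ))) τ := by
  have hsplit : (fun t => -log t + log (f ((x - μ) / t)))
      =ᶠ[nhds τ] fun t => log (locScale f μ t x) := by
    filter_upwards [eventually_ne_nhds hτ] with t ht
    rw [locScale, log_mul (inv_ne_zero ht) (hf _), log_inv]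
  have hinner : HasDerivAt (fun t => (x - μ) / t) (-(x - μ) / τ ^ 2) τ := by
    simpa only [div_eq_mul_inv, neg_mul, mul_neg] using (hasDerivAt_inv hτ).const_mul (x - μ)
  refine HasDerivAt.congr_of_eventuallyEq ?_ hsplit.symm
  have h := (hasDerivAt_log hτ).neg.add (hℓ.hasDerivAt.comp τ hinner)
  refine h.congr_deriv ?_
  field_simp
  ring

end LocationScale

section Score

variable {p τ : ℝ} (μ δ σ : ℝ)

lemma differentiableAt_log_repMix (hp : p ∈ Set.Ioc (0 : ℝ) 1) (hτ : τ ≠ 0) (x : ℝ) :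
    DifferentiableAt ℝ (fun z => log (repMix p μ τ δ σ z)) x :=
  (differentiable_repMix p μ τ δ σ x).log (repMix_pos hp hτ μ δ σ x).ne'

lemma repScore_one_eq (hp : p ∈ Set.Ioc (0 : ℝ) 1) (hτ : 0 < τ) (x : ℝ) :
    repScore 1 p μ τ δ σ x
      = -τ⁻¹ * deriv (fun z => log (repMix p 0 1 δ σ z)) ((x - μ) / τ) := by
  change deriv (fun t => log (repMix p t τ δ σ x)) μ = _
  simp_rw [repMix_eq_locScale hτ]
  exact (hasDerivAt_log_locScale_location (fun z => (repMix_pos hp one_ne_zero 0 δ σ z).ne')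
    hτ.ne' (differentiableAt_log_repMix 0 δ σ hp one_ne_zero _)).deriv

lemma repScore_two_eq (hp : p ∈ Set.Ioc (0 : ℝ) 1) (hτ : 0 < τ) (x : ℝ) :
    repScore 2 p μ τ δ σ x
      = -τ⁻¹ * (1 + (x - μ) / τ * deriv (fun z => log (repMix p 0 1 δ σ z)) ((x - μ) / τ)) := by
  change deriv (fun t => log (repMix p μ t δ σ x)) τ = _
  have hloc : (fun t => log (repMix p μ t δ σ x))
      =ᶠ[nhds τ] fun t => log (locScale (repMix p 0 1 δ σ) μ t x) := by
    filter_upwards [eventually_gt_nhds hτ] with t ht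
    rw [repMix_eq_locScale ht]
  rw [hloc.deriv_eq]
  exact (hasDerivAt_log_locScale_scale (fun z => (repMix_pos hp one_ne_zero 0 δ σ z).ne')
    hτ.ne' (differentiableAt_log_repMix 0 δ σ hp one_ne_zero _)).deriv

end Score

lemma repScore_eq_of_shape {a : Fin 5} (ha : a = 0 ∨ a = 3 ∨ a = 4) {p τ : ℝ}
    (hp : p ∈ Set.Ioo (0 : ℝ) 1) (hτ : 0 < τ) (μ δ σ x : ℝ) :
    repScore a p μ τ δ σ x = repScore a p 0 1 δ σ ((x - μ) / τ) := by
  have hpos {q : ℝ} (hq : q ∈ Set.Ioo (0 : ℝ) 1) (δ' σ' : ℝ) :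
      repMix q 0 1 δ' σ' ((x - μ) / τ) ≠ 0 :=
    (repMix_pos (Set.Ioo_subset_Ioc_self hq) one_ne_zero _ _ _ _).ne'
  rcases ha with rfl | rfl | rfl
  · change deriv (fun t => log (repMix t μ τ δ σ x)) p = deriv _ p
    simp_rw [repMix_eq_locScale hτ, locScale]
    exact deriv_log_const_mul (inv_ne_zero hτ.ne')
      (Filter.mem_of_superset (isOpen_Ioo.mem_nhds hp) fun q hq => hpos hq δ σ)
  · change deriv (fun t => log (repMix p μ τ t σ x)) δ = deriv _ δ
    simp_rw [repMix_eq_locScale hτ, locScale]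
    exact deriv_log_const_mul (inv_ne_zero hτ.ne') (.of_forall fun t => hpos hp t σ)
  · change deriv (fun t => log (repMix p μ τ δ t x)) σ = deriv _ σ
    simp_rw [repMix_eq_locScale hτ, locScale]
    exact deriv_log_const_mul (inv_ne_zero hτ.ne') (.of_forall fun t => hpos hp δ t)

def scoreScale (τ : ℝ) : Fin 5 → ℝ := ![1, τ⁻¹, τ⁻¹, 1, 1]

lemma repScore_affine {p τ : ℝ} (hp : p ∈ Set.Ioo (0 : ℝ) 1) (hτ : 0 < τ) (μ δ σ y : ℝ)
    (a : Fin 5) :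
    repScore a p μ τ δ σ (τ * y + μ) = scoreScale τ a * repScore a p 0 1 δ σ y := by
  have hp' := Set.Ioo_subset_Ioc_self hp
  have hy : (τ * y + μ - μ) / τ = y := by field_simp; ring
  obtain rfl | rfl | rfl | rfl | rfl : a = 0 ∨ a = 1 ∨ a = 2 ∨ a = 3 ∨ a = 4 := by
    fin_cases a <;> simp
  · rw [repScore_eq_of_shape (.inl rfl) hp hτ, hy]
    simp [scoreScale]
  · rw [repScore_one_eq _ _ _ hp' hτ, repScore_one_eq _ _ _ hp' one_pos, hy]
    simp [scoreScale]
  · rw [repScore_two_eq _ _ _ hp' hτ, repScore_two_eq _ _ _ hp' one_pos, hy]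
    simp only [scoreScale, sub_zero, div_one, inv_one, Matrix.cons_val]
    ring
  · rw [repScore_eq_of_shape (.inr (.inl rfl)) hp hτ, hy]
    simp [scoreScale]
  · rw [repScore_eq_of_shape (.inr (.inr rfl)) hp hτ, hy]
    simp [scoreScale]

lemma integral_eq_smul_integral_comp_mul_add {E : Type*} [NormedAddCommGroup E]
    [NormedSpace ℝ E] (F : ℝ → E) {τ : ℝ} (hτ : 0 < τ) (μ : ℝ) :
    ∫ x, F x = τ • ∫ y, F (τ * y + μ) := by
  rw [Measure.integral_comp_mul_left (fun z => F (z + μ)), integral_add_right_eq_self,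
    abs_of_pos (inv_pos.2 hτ), smul_smul, mul_inv_cancel₀ hτ.ne', one_smul]

lemma repFisher_apply_eq {p τ : ℝ} (hp : p ∈ Set.Ioo (0 : ℝ) 1) (hτ : 0 < τ) (μ δ σ : ℝ)
    (a b : Fin 5) :
    repFisher p μ τ δ σ a b = scoreScale τ a * repFisher p 0 1 δ σ a b * scoreScale τ b := by
  have hintegrand : ∀ y,
      repScore a p μ τ δ σ (τ * y + μ) * repScore b p μ τ δ σ (τ * y + μ)
          * repMix p μ τ δ σ (τ * y + μ)
        = τ⁻¹ * (scoreScale τ a * scoreScale τ b) *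
          (repScore a p 0 1 δ σ y * repScore b p 0 1 δ σ y * repMix p 0 1 δ σ y) := by
    intro y
    rw [repScore_affine hp hτ, repScore_affine hp hτ, repMix_affine hτ]
    ring
  rw [repFisher, repFisher, integral_eq_smul_integral_comp_mul_add _ hτ μ, smul_eq_mul]
  simp_rw [hintegrand]
  rw [integral_const_mul]
  field_simp

lemma repFisher_eq_diagonal_mul {p τ : ℝ} (hp : p ∈ Set.Ioo (0 : ℝ) 1) (hτ : 0 < τ)
    (μ δ σ : ℝ) :
    repFisher p μ τ δ σ
      = Matrix.diagonal (scoreScale τ) * repFisher p 0 1 δ σ * Matrix.diagonal (scoreScale τ) := by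
  ext a b
  rw [Matrix.mul_diagonal, Matrix.diagonal_mul, repFisher_apply_eq hp hτ]

lemma det_diagonal_scoreScale (τ : ℝ) : (Matrix.diagonal (scoreScale τ)).det = τ ^ (-2 : ℤ) := by
  simp [Matrix.det_diagonal, Fin.prod_univ_five, scoreScale, zpow_neg, sq]

lemma repFisher_det_eq {p τ : ℝ} (hp : p ∈ Set.Ioo (0 : ℝ) 1) (hτ : 0 < τ) (μ δ σ : ℝ) :
    (repFisher p μ τ δ σ).det = τ ^ (-4 : ℤ) * (repFisher p 0 1 δ σ).det := by
  rw [repFisher_eq_diagonal_mul hp hτ, Matrix.det_mul, Matrix.det_mul, det_diagonal_scoreScale,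
    mul_right_comm, ← zpow_add₀ hτ.ne']
  norm_num

lemma sqrt_zpow_neg_four_mul (τ D : ℝ) :
    √(τ ^ (-4 : ℤ) * D) = τ ^ (-2 : ℤ) * √D := by
  have h : τ ^ (-4 : ℤ) = (τ ^ (-2 : ℤ)) ^ 2 := by
    rw [← zpow_natCast, ← zpow_mul]
    norm_num
  rw [h, sqrt_mul (sq_nonneg _), sqrt_sq (by positivity)]

lemma setLIntegral_univ_prod_snd_eq_zero_or_top {α β : Type*} [MeasurableSpace α]
    [MeasurableSpace β] {μ : Measure α} [SFinite μ] (hμ : μ Set.univ = ⊤) {ν : Measure β}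
    [SFinite ν] {h : β → ℝ≥0∞} (hh : Measurable h) (t : Set β) :
    ∫⁻ v in Set.univ ×ˢ t, h v.2 ∂(μ.prod ν) = 0 ∨
      ∫⁻ v in Set.univ ×ˢ t, h v.2 ∂(μ.prod ν) = ⊤ := by
  rw [← Measure.prod_restrict,
    lintegral_prod (fun v => h v.2) (hh.comp measurable_snd).aemeasurable]
  simp only [lintegral_const, Measure.restrict_apply_univ, hμ]
  rcases eq_or_ne (∫⁻ y in t, h y ∂ν) 0 with h0 | h0
  · simp [h0]
  · simp [ENNReal.mul_top h0]

theorem repFisher_det_scaling_general (p μ τ δ σ : ℝ) (hp : p ∈ Set.Ioo (0 : ℝ) 1)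
    (hτ : 0 < τ) :
    (repFisher p μ τ δ σ).det = τ ^ (-4 : ℤ) * (repFisher p 0 1 δ σ).det ∧
    Real.sqrt (repFisher p μ τ δ σ).det =
      τ ^ (-2 : ℤ) * Real.sqrt (repFisher p 0 1 δ σ).det ∧
    ((∫⁻ v : ℝ × ℝ in Set.univ ×ˢ Set.Ioi (0 : ℝ),
        ENNReal.ofReal (Real.sqrt (repFisher p v.1 v.2 δ σ).det)) = 0 ∨
     (∫⁻ v : ℝ × ℝ in Set.univ ×ˢ Set.Ioi (0 : ℝ),
        ENNReal.ofReal (Real.sqrt (repFisher p v.1 v.2 δ σ).det)) = ⊤) := by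
  have hsqrt {m t : ℝ} (ht : 0 < t) :
      √(repFisher p m t δ σ).det = t ^ (-2 : ℤ) * √(repFisher p 0 1 δ σ).det := by
    rw [repFisher_det_eq hp ht, sqrt_zpow_neg_four_mul]
  refine ⟨repFisher_det_eq hp hτ μ δ σ, hsqrt hτ, ?_⟩
  rw [setLIntegral_congr_fun (MeasurableSet.univ.prod measurableSet_Ioi)
    fun v hv => by rw [hsqrt hv.2]]
  exact setLIntegral_univ_prod_snd_eq_zero_or_top (μ := volume) Real.volume_univ
    (h := fun t => ENNReal.ofReal (t ^ (-2 : ℤ) * √(repFisher p 0 1 δ σ).det)) (by fun_prop) _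

/-- `det I(p, μ, τ, δ, σ) = τ⁻⁴ det I(p, 0, 1, δ, σ)`.  In particular
the Jeffreys prior `√(det I(θ))` is constant in the reference location `μ` and
proportional to `τ⁻²` in the reference scale `τ`, hence improper: its integral over
`(μ, τ) ∈ ℝ × (0, ∞)` is `0` or `+∞`. -/
theorem repFisher_det_scaling (p μ τ δ σ : ℝ) (hp : p ∈ Set.Ioo (0 : ℝ) 1)
    (hτ : 0 < τ) (hσ : 0 < σ) :
    (repFisher p μ τ δ σ).det = τ ^ (-4 : ℤ) * (repFisher p 0 1 δ σ).det ∧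
    Real.sqrt (repFisher p μ τ δ σ).det =
      τ ^ (-2 : ℤ) * Real.sqrt (repFisher p 0 1 δ σ).det ∧
    ((∫⁻ v : ℝ × ℝ in Set.univ ×ˢ Set.Ioi (0 : ℝ),
        ENNReal.ofReal (Real.sqrt (repFisher p v.1 v.2 δ σ).det)) = 0 ∨
     (∫⁻ v : ℝ × ℝ in Set.univ ×ˢ Set.Ioi (0 : ℝ),
        ENNReal.ofReal (Real.sqrt (repFisher p v.1 v.2 δ σ).det)) = ⊤) :=
  repFisher_det_scaling_general p μ τ δ σ hp hτ
end
end

section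
/- Fix p₁, p₂ > 0 and σ₁, σ₂ > 0. Then lim_{δ → +∞} ∫_ℝ t² φ_{σ₁}(t)² / ( p₁ φ_{σ₁}(t) + p₂ φ_{σ₂}(t − δ) ) dt = σ₁²/p₁, and the same limit holds as δ → −∞. (Thus the diagonal Fisher-information entry for the mean of one Gaussian component tends to the positive constant σ₁²/p₁ as the other component's mean moves to infinity; this is why the Jeffreys prior on the means does not decay along these directions.) -/
/-!
For every fixed `t`, `φ_{σ₂}(t - δ) → 0` as `|δ| → ∞`, so the integrand converges pointwise to
`t² φ_{σ₁}(t) / p₁`; dropping `p₂ φ_{σ₂}` from the denominator shows that this limit also dominates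
the integrand. Dominated convergence reduces the claim to the second moment `σ₁²` of `φ_{σ₁}`.
-/

open MeasureTheory Filter

noncomputable section

open ProbabilityTheory Topology

lemma tendsto_integral_sq_div_mixture {ι α : Type*} [MeasurableSpace α] {μ : Measure α}
    {l : Filter ι} [l.IsCountablyGenerated] {w f : α → ℝ} {g : ι → α → ℝ} {p₁ p₂ : ℝ}
    (hp₁ : 0 < p₁) (hp₂ : 0 ≤ p₂) (hf : ∀ t, 0 < f t) (hg : ∀ δ t, 0 ≤ g δ t)
    (hwf : Integrable (fun t => w t * f t) μ) (hf_meas : AEMeasurable f μ)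
    (hg_meas : ∀ δ, AEMeasurable (g δ) μ) (hg_lim : ∀ t, Tendsto (g · t) l (𝓝 0)) :
    Tendsto (fun δ => ∫ t, w t * f t ^ 2 / (p₁ * f t + p₂ * g δ t) ∂μ) l
      (𝓝 ((∫ t, w t * f t ∂μ) / p₁)) := by
  have hden : ∀ δ t, p₁ * f t ≤ p₁ * f t + p₂ * g δ t := fun δ t =>
    le_add_of_nonneg_right (mul_nonneg hp₂ (hg δ t))
  have hpf : ∀ t, 0 < p₁ * f t := fun t => mul_pos hp₁ (hf t)
  have hsplit : ∀ δ t, w t * f t ^ 2 / (p₁ * f t + p₂ * g δ t)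
      = w t * f t * (f t / (p₁ * f t + p₂ * g δ t)) := fun δ t => by ring
  rw [← integral_div p₁ (fun t => w t * f t)]
  refine tendsto_integral_filter_of_dominated_convergence (fun t => |w t * f t| / p₁)
    (Eventually.of_forall fun δ => ?_) (Eventually.of_forall fun δ => ?_)
    (hwf.abs.div_const p₁) (ae_of_all _ fun t => ?_)
  · simp_rw [hsplit]
    exact (hwf.aemeasurable.mul
      (hf_meas.div ((hf_meas.const_mul p₁).add ((hg_meas δ).const_mul p₂)))).aestronglyMeasurable
  · refine ae_of_all _ fun t => ?_
    have hratio : f t / (p₁ * f t + p₂ * g δ t) ≤ 1 / p₁ := by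
      rw [div_le_div_iff₀ ((hpf t).trans_le (hden δ t)) hp₁]
      linarith [hden δ t]
    rw [hsplit, norm_mul, Real.norm_eq_abs, Real.norm_of_nonneg
      (div_nonneg (hf t).le ((hpf t).le.trans (hden δ t))), div_eq_mul_one_div _ p₁]
    exact mul_le_mul_of_nonneg_left hratio (abs_nonneg _)
  · have hlim := (tendsto_const_nhds (x := p₁ * f t)).add ((hg_lim t).const_mul p₂)
    rw [mul_zero, add_zero] at hlim
    have hval : w t * f t / p₁ = w t * f t ^ 2 / (p₁ * f t) := by field_simp [(hf t).ne']
    rw [hval]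
    exact tendsto_const_nhds.div hlim (hpf t).ne'

lemma gaussPdf_eq_gaussianPDFReal (σ : ℝ) : gaussPdf σ = gaussianPDFReal 0 (σ ^ 2).toNNReal := by
  ext x
  simp [gaussPdf, gaussianPDFReal, Real.coe_toNNReal _ (sq_nonneg σ)]

lemma toNNReal_sq_ne_zero {σ : ℝ} (hσ : σ ≠ 0) : (σ ^ 2).toNNReal ≠ 0 := by
  simpa using hσ

lemma gaussPdf_pos_s13 {σ : ℝ} (hσ : σ ≠ 0) (x : ℝ) : 0 < gaussPdf σ x := by
  rw [gaussPdf_eq_gaussianPDFReal]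
  exact gaussianPDFReal_pos _ _ x (toNNReal_sq_ne_zero hσ)

@[fun_prop]
lemma measurable_gaussPdf (σ : ℝ) : Measurable (gaussPdf σ) := by
  rw [gaussPdf_eq_gaussianPDFReal]
  exact measurable_gaussianPDFReal _ _

lemma integral_sq_mul_gaussPdf {σ : ℝ} (hσ : σ ≠ 0) : ∫ x, x ^ 2 * gaussPdf σ x = σ ^ 2 := by
  have h := variance_of_integral_eq_zero measurable_id.aemeasurable
    (integral_id_gaussianReal (μ := 0) (v := (σ ^ 2).toNNReal))
  rw [variance_id_gaussianReal, integral_gaussianReal_eq_integral_smul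
    (toNNReal_sq_ne_zero hσ)] at h
  simp_rw [gaussPdf_eq_gaussianPDFReal, mul_comm _ (gaussianPDFReal _ _ _)]
  simpa [Real.coe_toNNReal _ (sq_nonneg σ)] using h.symm

lemma integrable_sq_mul_gaussPdf {σ : ℝ} (hσ : σ ≠ 0) :
    Integrable fun x => x ^ 2 * gaussPdf σ x :=
  Integrable.of_integral_ne_zero <| by simpa [integral_sq_mul_gaussPdf hσ] using hσ

lemma tendsto_gaussPdf_cocompact {σ : ℝ} (hσ : σ ≠ 0) :
    Tendsto (gaussPdf σ) (cocompact ℝ) (𝓝 0) := by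
  have hsq : Tendsto (fun x : ℝ => x ^ 2) (cocompact ℝ) atTop := by
    simpa only [Function.comp_def, Real.norm_eq_abs, sq_abs] using
      (tendsto_pow_atTop two_ne_zero).comp (tendsto_norm_cocompact_atTop (E := ℝ))
  have hexp : Tendsto (fun x : ℝ => Real.exp (-(x ^ 2) / (2 * σ ^ 2))) (cocompact ℝ) (𝓝 0) := by
    simp_rw [neg_div]
    exact Real.tendsto_exp_atBot.comp
      (tendsto_neg_atTop_atBot.comp (hsq.atTop_div_const (by positivity)))
  unfold gaussPdf
  simpa only [mul_zero] using hexp.const_mul (Real.sqrt (2 * Real.pi * σ ^ 2))⁻¹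

lemma tendsto_gaussPdf_sub_cocompact {σ : ℝ} (hσ : σ ≠ 0) (t : ℝ) :
    Tendsto (fun δ => gaussPdf σ (t - δ)) (cocompact ℝ) (𝓝 0) :=
  (tendsto_gaussPdf_cocompact hσ).comp (Homeomorph.subLeft t).isClosedEmbedding.tendsto_cocompact

/-- for fixed `p₁, p₂ > 0` and `σ₁, σ₂ > 0`,
`∫ t² φ_{σ₁}(t)² / (p₁ φ_{σ₁}(t) + p₂ φ_{σ₂}(t - δ)) dt → σ₁²/p₁`
as `δ → +∞`, and the same limit holds as `δ → -∞`.  (The diagonal Fisher-information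
entry for the mean of one Gaussian component tends to a positive constant as the
other component's mean moves to infinity.) -/
theorem meanFisher_entry_limit (p₁ p₂ σ₁ σ₂ : ℝ)
    (hp₁ : 0 < p₁) (hp₂ : 0 < p₂) (hσ₁ : 0 < σ₁) (hσ₂ : 0 < σ₂) :
    Tendsto (fun δ : ℝ => ∫ t : ℝ,
        t ^ 2 * gaussPdf σ₁ t ^ 2 / (p₁ * gaussPdf σ₁ t + p₂ * gaussPdf σ₂ (t - δ)))
      atTop (nhds (σ₁ ^ 2 / p₁)) ∧
    Tendsto (fun δ : ℝ => ∫ t : ℝ,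
        t ^ 2 * gaussPdf σ₁ t ^ 2 / (p₁ * gaussPdf σ₁ t + p₂ * gaussPdf σ₂ (t - δ)))
      atBot (nhds (σ₁ ^ 2 / p₁)) := by
  have hshift : ∀ t, Tendsto (fun δ => gaussPdf σ₂ (t - δ)) (atBot ⊔ atTop) (𝓝 0) := by
    simpa only [← cocompact_eq_atBot_atTop] using tendsto_gaussPdf_sub_cocompact hσ₂.ne'
  have key := tendsto_integral_sq_div_mixture (μ := volume) (w := fun t => t ^ 2) hp₁ hp₂.le
    (gaussPdf_pos_s13 hσ₁.ne') (fun δ t => (gaussPdf_pos_s13 hσ₂.ne' (t - δ)).le)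
    (integrable_sq_mul_gaussPdf hσ₁.ne') (by fun_prop) (fun δ => by fun_prop) hshift
  rw [integral_sq_mul_gaussPdf hσ₁.ne'] at key
  exact (tendsto_sup.1 key).symm
end
end
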